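/- Let A be an algebra, a, b, x, y ∈ A with a, b invertible, λ, q ∈ k nonzero, such that gxg⁻¹ = qx and gyg⁻¹ = q⁻¹y for g = a and g = b, and _b[y,x] = λ(ab − 1). Then for every natural number m ≥ 1: y x^m − b x^m b⁻¹ y = λ (m)_q x^{m−1} (q^{m−1} ab − 1). -/

import Mathlib

/-! Conjugation by `b` turns the hypothesis into `y x = q x y + λ (ab - 1)`, and `ab x = q² x ab`.
Moving `y` to the right through `x^(n+1)` one factor at a time then gives the formula by
induction on `n`: the new term `λ (ab - 1) x^(n+1) = λ x^(n+1) (q^(2n+2) ab - 1)` is absorbed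
through `(n+2)_q = q (n+1)_q + 1 = (n+1)_q + q^(n+1)`. -/

open Finset

section

variable {k A : Type*} [CommRing k] [Ring A] [Algebra k A]

theorem Units.mul_eq_smul_mul_of_conj_eq_smul {u : Aˣ} {x : A} {q : k}
    (h : (u : A) * x * ((u⁻¹ : Aˣ) : A) = q • x) : (u : A) * x = q • (x * u) := by
  rw [← smul_mul_assoc, ← h, Units.inv_mul_cancel_right]

theorem mul_mul_eq_smul_mul_of_mul_eq_smul {a b x : A} {q r : k}
    (ha : a * x = q • (x * a)) (hb : b * x = r • (x * b)) :
    a * b * x = (q * r) • (x * (a * b)) := by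
  rw [mul_assoc, hb, mul_smul_comm, ← mul_assoc, ha, smul_mul_assoc, smul_smul, mul_comm r,
    mul_assoc]

theorem mul_pow_eq_smul_pow_mul_of_mul_eq_smul {c x : A} {r : k} (h : c * x = r • (x * c))
    (n : ℕ) : c * x ^ n = r ^ n • (x ^ n * c) := by
  induction n with
  | zero => simp
  | succ n ih =>
    rw [pow_succ, ← mul_assoc, ih, smul_mul_assoc, mul_assoc, h, mul_smul_comm, smul_smul,
      ← mul_assoc, pow_succ]

theorem mul_pow_succ_eq_smul_pow_mul_add {x y c : A} {q lam : k}
    (hyx : y * x = q • (x * y) + lam • (c - 1)) (hcx : c * x = (q * q) • (x * c)) (n : ℕ) :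
    y * x ^ (n + 1) = q ^ (n + 1) • (x ^ (n + 1) * y)
      + (lam * ∑ i ∈ range (n + 1), q ^ i) • (x ^ n * (q ^ n • c - 1)) := by
  induction n with
  | zero => simpa using hyx
  | succ n ih =>
    calc y * x ^ (n + 1 + 1) = (y * x) * x ^ (n + 1) := by rw [mul_assoc, ← pow_succ']
      _ = q • (x * (y * x ^ (n + 1))) + lam • (c * x ^ (n + 1) - x ^ (n + 1)) := by
        rw [hyx, add_mul, smul_mul_assoc, smul_mul_assoc, mul_assoc, sub_mul, one_mul]
      _ = _ := by
        rw [ih, mul_pow_eq_smul_pow_mul_of_mul_eq_smul hcx (n + 1)]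
        simp only [mul_add, mul_sub, smul_add, smul_sub, mul_smul_comm, smul_smul, ← mul_assoc,
          ← pow_succ', mul_one]
        match_scalars
        · ring
        · rw [sum_range_succ _ (n + 1)]; ring
        · rw [geom_sum_succ (n := n + 1)]; ring

end

theorem power_commutator_rel_two_general {k A : Type*} [Field k] [Ring A] [Algebra k A]
    (a b : Aˣ) (x y : A) (q lam : k)
    (hax : (a : A) * x * ((a⁻¹ : Aˣ) : A) = q • x)
    (hbx : (b : A) * x * ((b⁻¹ : Aˣ) : A) = q • x)
    (hc : y * x - ((b : A) * x * ((b⁻¹ : Aˣ) : A)) * y = lam • ((a : A) * (b : A) - 1)) :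
    ∀ m : ℕ, 1 ≤ m →
      y * x ^ m - ((b : A) * x ^ m * ((b⁻¹ : Aˣ) : A)) * y
        = (lam * ∑ i ∈ Finset.range m, q ^ i) •
            (x ^ (m - 1) * (q ^ (m - 1) • ((a : A) * (b : A)) - 1)) := by
  intro m hm
  obtain ⟨n, rfl⟩ := Nat.exists_eq_add_of_le' hm
  have hyx : y * x = q • (x * y) + lam • ((a : A) * b - 1) := by
    rwa [hbx, smul_mul_assoc, sub_eq_iff_eq_add'] at hc
  have habx := mul_mul_eq_smul_mul_of_mul_eq_smul
    (Units.mul_eq_smul_mul_of_conj_eq_smul hax) (Units.mul_eq_smul_mul_of_conj_eq_smul hbx)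
  rw [← Units.conj_pow, hbx, smul_pow, smul_mul_assoc,
    mul_pow_succ_eq_smul_pow_mul_add hyx habx n, add_sub_cancel_left, Nat.add_sub_cancel]

/-- Lemma on powers: `_b[y, x^m] = λ (m)_q x^{m-1} (q^{m-1} ab - 1)`. -/
theorem power_commutator_rel_two {k A : Type*} [Field k] [CharZero k] [Ring A] [Algebra k A]
    (a b : Aˣ) (x y : A) (q lam : k) (hq : q ≠ 0) (hlam : lam ≠ 0)
    (hax : (a : A) * x * ((a⁻¹ : Aˣ) : A) = q • x)
    (hbx : (b : A) * x * ((b⁻¹ : Aˣ) : A) = q • x)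
    (hay : (a : A) * y * ((a⁻¹ : Aˣ) : A) = q⁻¹ • y)
    (hby : (b : A) * y * ((b⁻¹ : Aˣ) : A) = q⁻¹ • y)
    (hc : y * x - ((b : A) * x * ((b⁻¹ : Aˣ) : A)) * y = lam • ((a : A) * (b : A) - 1)) :
    ∀ m : ℕ, 1 ≤ m →
      y * x ^ m - ((b : A) * x ^ m * ((b⁻¹ : Aˣ) : A)) * y
        = (lam * ∑ i ∈ Finset.range m, q ^ i) •
            (x ^ (m - 1) * (q ^ (m - 1) • ((a : A) * (b : A)) - 1)) :=
  power_commutator_rel_two_general a b x y q lam hax hbx hc
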